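/- arXiv:2405.20108 — 2 statements merged into one kernel-verified Lean document; each statement's English description precedes it below -/
import Mathlib

section
/- Let f : ℂ → ℂ belong to OM₊ and suppose f is not identically zero on the slit plane ℂ ∖ (−∞,0]. Then for every z ∈ ℂ with Im z > 0 one has 0 ≤ Arg f(z) ≤ Arg z < π, where Arg denotes the principal argument. -/
open Complex MeasureTheory Filter

noncomputable section

/-- The open horizontal strip `D = {w : ℂ | -π < Im w < π}`. -/
def strip : Set ℂ := {w : ℂ | -Real.pi < w.im ∧ w.im < Real.pi}

/-- The class `OM₊`: functions analytic on the slit plane `ℂ \ (-∞,0]`,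
nonnegative real on the positive real axis, with nonnegative imaginary part
on the upper half-plane. -/
def OMplus (f : ℂ → ℂ) : Prop :=
  DifferentiableOn ℂ f Complex.slitPlane ∧
  (∀ x : ℝ, 0 < x → ∃ t : ℝ, 0 ≤ t ∧ f (x : ℂ) = (t : ℂ)) ∧
  (∀ z : ℂ, 0 < z.im → 0 ≤ (f z).im)

section aux

open Set Metric Topology

lemma slit_preconn : IsPreconnected Complex.slitPlane := by
  apply isPreconnected_of_forall (1 : ℂ)
  intro x hx
  exact ⟨segment ℝ 1 x, starConvex_one_slitPlane.segment_subset hx,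
    left_mem_segment ℝ 1 x, right_mem_segment ℝ 1 x, (convex_segment 1 x).isPreconnected⟩

lemma conj_mem_slit {z : ℂ} (hz : z ∈ Complex.slitPlane) :
    (starRingEnd ℂ) z ∈ Complex.slitPlane := by
  rcases hz with h | h
  · exact Or.inl (by simpa using h)
  · exact Or.inr (by simpa using h)

lemma diffat_reflect {f : ℂ → ℂ} {z : ℂ}
    (hf : DifferentiableAt ℂ f ((starRingEnd ℂ) z)) :
    DifferentiableAt ℂ (fun w => (starRingEnd ℂ) (f ((starRingEnd ℂ) w))) z := by
  obtain ⟨d, hd⟩ : ∃ d, HasDerivAt f d ((starRingEnd ℂ) z) := ⟨_, hf.hasDerivAt⟩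
  have key : HasDerivAt (fun w => (starRingEnd ℂ) (f ((starRingEnd ℂ) w)))
      ((starRingEnd ℂ) d) z := by
    rw [hasDerivAt_iff_tendsto_slope] at hd ⊢
    have h1 : Tendsto (fun w : ℂ => (starRingEnd ℂ) w) (𝓝[≠] z)
        (𝓝[≠] ((starRingEnd ℂ) z)) := by
      rw [tendsto_nhdsWithin_iff]
      constructor
      · exact (Complex.continuous_conj.tendsto z).mono_left nhdsWithin_le_nhds
      · filter_upwards [self_mem_nhdsWithin] with w hw
        exact fun h => hw ((starRingEnd ℂ).injective h)
    have h2 : Tendsto (fun w : ℂ => (starRingEnd ℂ) (slope f ((starRingEnd ℂ) z)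
        ((starRingEnd ℂ) w))) (𝓝[≠] z) (𝓝 ((starRingEnd ℂ) d)) :=
      (Complex.continuous_conj.tendsto d).comp (hd.comp h1)
    refine h2.congr fun w => ?_
    simp only [slope_def_field, Function.comp]
    rw [map_div₀, map_sub, map_sub, Complex.conj_conj, Complex.conj_conj]
  exact key.differentiableAt

end aux

/-- For `f ∈ OM₊` not identically zero on the slit plane,
`0 ≤ Arg f(z) ≤ Arg z < π` whenever `Im z > 0`. -/
theorem stmt_1 (f : ℂ → ℂ) (hf : OMplus f)
    (hne : ∃ z ∈ Complex.slitPlane, f z ≠ 0) :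
    ∀ z : ℂ, 0 < z.im →
      0 ≤ (f z).arg ∧ (f z).arg ≤ z.arg ∧ z.arg < Real.pi := by
  obtain ⟨hd, hreal, him⟩ := hf
  have hopen := Complex.isOpen_slitPlane
  have hconn := slit_preconn
  have ha : AnalyticOnNhd ℂ f Complex.slitPlane := hd.analyticOnNhd hopen
  intro z hz
  have hzslit : z ∈ Complex.slitPlane := Or.inr (ne_of_gt hz)
  have hargz_nonneg : 0 ≤ z.arg := Complex.arg_nonneg_iff.mpr hz.le
  have hargz_lt : z.arg < Real.pi := Complex.arg_lt_pi_iff.mpr (Or.inr (ne_of_gt hz))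
  have hargf_nonneg : 0 ≤ (f z).arg := Complex.arg_nonneg_iff.mpr (him z hz)
  refine ⟨hargf_nonneg, ?_, hargz_lt⟩
  by_cases hc : ∀ w ∈ Complex.slitPlane, f w = f 1
  · obtain ⟨t, ht0, htf⟩ := hreal 1 one_pos
    rw [Complex.ofReal_one] at htf
    rw [hc z hzslit, htf, Complex.arg_ofReal_of_nonneg ht0]
    exact hargz_nonneg
  -- nonconstant case
  have hnc : ∀ z₀ ∈ Complex.slitPlane, ¬ (∀ᶠ w in nhds z₀, f w = f z₀) := by
    intro z₀ hz₀ hev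
    apply hc
    intro w hw
    have heq : Set.EqOn f (fun _ => f z₀) Complex.slitPlane :=
      ha.eqOn_of_preconnected_of_eventuallyEq analyticOnNhd_const hconn hz₀ hev
    rw [heq hw, heq Complex.one_mem_slitPlane]
  have hpos : ∀ w : ℂ, 0 < w.im → 0 < (f w).im := by
    intro w hw
    rcases (him w hw).lt_or_eq with h | h
    · exact h
    exfalso
    have hwslit : w ∈ Complex.slitPlane := Or.inr (ne_of_gt hw)
    rcases (ha w hwslit).eventually_constant_or_nhds_le_map_nhds with hk | hk
    · exact hnc w hwslit hk
    have hball : {v : ℂ | 0 < v.im} ∈ nhds w :=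
      (isOpen_lt continuous_const Complex.continuous_im).mem_nhds hw
    have himg : f '' {v : ℂ | 0 < v.im} ∈ nhds (f w) := hk (Filter.image_mem_map hball)
    obtain ⟨δ, hδ, hsub⟩ := Metric.mem_nhds_iff.mp himg
    have hmem : f w - ((δ/2 : ℝ) : ℂ) * Complex.I ∈ Metric.ball (f w) δ := by
      rw [Metric.mem_ball, dist_eq_norm]
      have he : f w - ((δ/2 : ℝ) : ℂ) * Complex.I - f w = -(((δ/2 : ℝ) : ℂ) * Complex.I) := by
        ring
      rw [he, norm_neg, norm_mul, Complex.norm_I, mul_one]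
      have : ‖(((δ/2 : ℝ)) : ℂ)‖ = |δ/2| := by simp [abs_div]
      rw [this, abs_of_pos (by linarith : (0:ℝ) < δ/2)]
      linarith
    obtain ⟨s, hs, hfs⟩ := hsub hmem
    have h1 : 0 ≤ (f s).im := him s hs
    rw [hfs] at h1
    simp only [Complex.sub_im, Complex.mul_im, Complex.I_im, Complex.I_re,
      Complex.ofReal_re, Complex.ofReal_im, mul_one, mul_zero, zero_mul, add_zero] at h1
    rw [← h] at h1
    linarith
  -- reflection principle
  have hrefl : Set.EqOn f (fun w => (starRingEnd ℂ) (f ((starRingEnd ℂ) w)))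
      Complex.slitPlane := by
    have hg_diff : DifferentiableOn ℂ (fun w => (starRingEnd ℂ) (f ((starRingEnd ℂ) w)))
        Complex.slitPlane := by
      intro w hw
      exact (diffat_reflect (hd.differentiableAt
        (hopen.mem_nhds (conj_mem_slit hw)))).differentiableWithinAt
    have hg_an : AnalyticOnNhd ℂ (fun w => (starRingEnd ℂ) (f ((starRingEnd ℂ) w)))
        Complex.slitPlane := hg_diff.analyticOnNhd hopen
    apply ha.eqOn_of_preconnected_of_frequently_eq hg_an hconn Complex.one_mem_slitPlane
    have htend : Tendsto (fun x : ℝ => (x : ℂ)) (nhdsWithin 1 (Set.Ioi 1))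
        (nhdsWithin (1 : ℂ) {(1 : ℂ)}ᶜ) := by
      rw [tendsto_nhdsWithin_iff]
      constructor
      · exact (Complex.continuous_ofReal.tendsto 1).mono_left nhdsWithin_le_nhds
      · filter_upwards [self_mem_nhdsWithin] with x hx
        simp only [Set.mem_compl_iff, Set.mem_singleton_iff]
        intro hcontra
        rw [show (1 : ℂ) = ((1 : ℝ) : ℂ) from by norm_num] at hcontra
        have := Complex.ofReal_injective hcontra
        exact absurd this (ne_of_gt hx)
    have hev : ∀ᶠ (x : ℝ) in nhdsWithin (1 : ℝ) (Set.Ioi 1),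
        f (x : ℂ) = (starRingEnd ℂ) (f ((starRingEnd ℂ) (x : ℂ))) := by
      filter_upwards [self_mem_nhdsWithin] with x hx
      obtain ⟨t, ht, hft⟩ := hreal x (lt_trans one_pos hx)
      rw [Complex.conj_ofReal, hft, Complex.conj_ofReal]
    exact htend.frequently hev.frequently
  -- strict positivity on the positive real axis
  have hx_pos : ∀ x : ℝ, 0 < x → ∃ t : ℝ, 0 < t ∧ f (x : ℂ) = (t : ℂ) := by
    intro x hx
    obtain ⟨t, ht0, hft⟩ := hreal x hx
    rcases ht0.lt_or_eq with ht | ht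
    · exact ⟨t, ht, hft⟩
    exfalso
    rw [← ht, Complex.ofReal_zero] at hft
    have hxslit : (x : ℂ) ∈ Complex.slitPlane := Complex.ofReal_mem_slitPlane.2 hx
    rcases (ha _ hxslit).eventually_constant_or_nhds_le_map_nhds with hk | hk
    · rw [hft] at hk
      exact hnc _ hxslit (by simpa [hft] using hk)
    have himg : f '' Complex.slitPlane ∈ nhds (f (x : ℂ)) :=
      hk (Filter.image_mem_map (hopen.mem_nhds hxslit))
    rw [hft] at himg
    obtain ⟨δ, hδ, hsub⟩ := Metric.mem_nhds_iff.mp himg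
    have hmem : ((-(δ/2) : ℝ) : ℂ) ∈ Metric.ball (0 : ℂ) δ := by
      rw [Metric.mem_ball, dist_zero_right]
      have : ‖((-(δ/2) : ℝ) : ℂ)‖ = |(-(δ/2) : ℝ)| := by simp [abs_div]
      rw [this, abs_neg, abs_of_pos (by linarith : (0:ℝ) < δ/2)]
      linarith
    obtain ⟨s, hs, hfs⟩ := hsub hmem
    rcases lt_trichotomy s.im 0 with h | h | h
    · have h2 : 0 < ((starRingEnd ℂ) s).im := by
        rw [Complex.conj_im]; linarith
      have h3 : f s = (starRingEnd ℂ) (f ((starRingEnd ℂ) s)) := hrefl hs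
      have h4 := hpos _ h2
      have h5 : (f s).im = -(f ((starRingEnd ℂ) s)).im := by
        rw [h3, Complex.conj_im]
      rw [hfs] at h5
      simp only [Complex.ofReal_im] at h5
      linarith
    · have hsre : 0 < s.re := by
        rcases hs with h' | h'
        · exact h'
        · exact absurd h h'
      have hseq : s = ((s.re : ℝ) : ℂ) := Complex.ext rfl (by simp [h])
      obtain ⟨t', ht', hft'⟩ := hreal s.re hsre
      rw [hseq, hft'] at hfs
      have := Complex.ofReal_injective hfs
      linarith
    · have h4 := hpos s h
      rw [hfs] at h4
      simp only [Complex.ofReal_im] at h4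
      linarith
  -- Phragmen-Lindelof argument
  by_contra hgt'
  push_neg at hgt'
  set ε := min (((f z).arg - z.arg)/2) ((Real.pi - z.arg)/2) with hεdef
  have hε_pos : 0 < ε := lt_min (by linarith) (by linarith)
  have hε1 : ε ≤ ((f z).arg - z.arg)/2 := min_le_left _ _
  have hε2 : ε ≤ (Real.pi - z.arg)/2 := min_le_right _ _
  have hb_pos : 0 < Real.pi - ε := by linarith
  have hb_lt : Real.pi - ε < Real.pi := by linarith
  have hwre : ∀ w : ℂ, w.im = 0 → Complex.exp w = ((Real.exp w.re : ℝ) : ℂ) := by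
    intro w h
    have hw : w = ((w.re : ℝ) : ℂ) := Complex.ext rfl (by simp [h])
    rw [Complex.ofReal_exp, ← hw]
  have hexp_slit : ∀ w : ℂ, 0 ≤ w.im → w.im ≤ Real.pi - ε →
      Complex.exp w ∈ Complex.slitPlane := by
    intro w h0 h1
    rcases h0.lt_or_eq with h | h
    · refine Or.inr (ne_of_gt ?_)
      rw [Complex.exp_im]
      exact mul_pos (Real.exp_pos _) (Real.sin_pos_of_pos_of_lt_pi h (by linarith))
    · rw [hwre w h.symm]
      exact Complex.ofReal_mem_slitPlane.2 (Real.exp_pos _)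
  have hfexp_slit : ∀ w : ℂ, 0 ≤ w.im → w.im ≤ Real.pi - ε →
      f (Complex.exp w) ∈ Complex.slitPlane := by
    intro w h0 h1
    rcases h0.lt_or_eq with h | h
    · refine Or.inr (ne_of_gt (hpos _ ?_))
      rw [Complex.exp_im]
      exact mul_pos (Real.exp_pos _) (Real.sin_pos_of_pos_of_lt_pi h (by linarith))
    · rw [hwre w h.symm]
      obtain ⟨t, ht, hft⟩ := hx_pos (Real.exp w.re) (Real.exp_pos _)
      rw [hft]
      exact Complex.ofReal_mem_slitPlane.2 ht
  set V : ℂ → ℂ :=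
    fun w => Complex.exp (-Complex.I * (Complex.log (f (Complex.exp w)) - w)) with hVdef
  have hnorm : ∀ w : ℂ, ‖V w‖ = Real.exp ((f (Complex.exp w)).arg - w.im) := by
    intro w
    rw [hVdef]
    rw [Complex.norm_exp]
    congr 1
    simp [Complex.mul_re, Complex.sub_im, Complex.log_im]
  have hfd : DiffContOnCl ℂ V (Complex.im ⁻¹' Set.Ioo 0 (Real.pi - ε)) := by
    constructor
    · intro w hw
      simp only [Set.mem_preimage, Set.mem_Ioo] at hw
      have h1 : DifferentiableAt ℂ Complex.exp w := Complex.differentiable_exp.differentiableAt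
      have h2 : DifferentiableAt ℂ f (Complex.exp w) :=
        hd.differentiableAt (hopen.mem_nhds (hexp_slit w hw.1.le hw.2.le))
      have h3 : DifferentiableAt ℂ Complex.log (f (Complex.exp w)) :=
        Complex.differentiableAt_log (hfexp_slit w hw.1.le hw.2.le)
      exact ((((h3.comp w (h2.comp w h1)).sub differentiableAt_id).const_mul
        (-Complex.I)).cexp).differentiableWithinAt
    · have hsub : closure (Complex.im ⁻¹' Set.Ioo 0 (Real.pi - ε)) ⊆
          Complex.im ⁻¹' Set.Icc 0 (Real.pi - ε) :=
        closure_minimal (Set.preimage_mono Set.Ioo_subset_Icc_self)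
          (IsClosed.preimage Complex.continuous_im isClosed_Icc)
      refine ContinuousOn.mono ?_ hsub
      intro w hw
      simp only [Set.mem_preimage, Set.mem_Icc] at hw
      have h1 : ContinuousAt Complex.exp w := Complex.continuous_exp.continuousAt
      have h2 : ContinuousAt f (Complex.exp w) :=
        (hd.differentiableAt (hopen.mem_nhds (hexp_slit w hw.1 hw.2))).continuousAt
      have h3 : ContinuousAt Complex.log (f (Complex.exp w)) :=
        continuousAt_clog (hfexp_slit w hw.1 hw.2)
      have c1 : ContinuousAt (fun w => f (Complex.exp w)) w := h2.comp h1
      have c2 := ContinuousAt.comp (x := w) h3 c1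
      have c3 := ContinuousAt.comp (x := w) Complex.continuous_exp.continuousAt
          ((c2.sub continuousAt_id).const_mul (-Complex.I))
      exact c3.continuousWithinAt
  have hB : ∃ c < Real.pi / (Real.pi - ε - 0), ∃ B,
      V =O[Filter.comap (_root_.abs ∘ Complex.re) Filter.atTop ⊓
        Filter.principal (Complex.im ⁻¹' Set.Ioo 0 (Real.pi - ε))]
        fun w => Real.exp (B * Real.exp (c * |w.re|)) := by
    refine ⟨0, by rw [sub_zero]; exact div_pos Real.pi_pos hb_pos, Real.pi, ?_⟩
    refine Asymptotics.IsBigO.of_bound 1 ?_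
    rw [Filter.eventually_inf_principal]
    refine Filter.Eventually.of_forall ?_
    intro w hw
    simp only [Set.mem_preimage, Set.mem_Ioo] at hw
    rw [hnorm w]
    simp only [zero_mul, Real.exp_zero, mul_one, one_mul, Real.norm_eq_abs, Real.abs_exp]
    exact Real.exp_le_exp.mpr (by linarith [Complex.arg_le_pi (f (Complex.exp w))])
  have hle_a : ∀ w : ℂ, w.im = 0 → ‖V w‖ ≤ Real.exp ε := by
    intro w hw
    rw [hnorm w, hw, hwre w hw]
    obtain ⟨t, ht, hft⟩ := hx_pos (Real.exp w.re) (Real.exp_pos _)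
    rw [hft, Complex.arg_ofReal_of_nonneg ht.le]
    exact Real.exp_le_exp.mpr (by linarith)
  have hle_b : ∀ w : ℂ, w.im = Real.pi - ε → ‖V w‖ ≤ Real.exp ε := by
    intro w hw
    rw [hnorm w, hw]
    exact Real.exp_le_exp.mpr (by linarith [Complex.arg_le_pi (f (Complex.exp w))])
  have hza : 0 ≤ (Complex.log z).im := by rw [Complex.log_im]; exact hargz_nonneg
  have hzb : (Complex.log z).im ≤ Real.pi - ε := by
    rw [Complex.log_im]; linarith
  have hmain : ‖V (Complex.log z)‖ ≤ Real.exp ε :=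
    PhragmenLindelof.horizontal_strip hfd hB hle_a hle_b hza hzb
  rw [hnorm, Complex.exp_log (Complex.slitPlane_ne_zero hzslit), Complex.log_im] at hmain
  have := Real.exp_le_exp.mp hmain
  linarith
end
end

section
/- Let S : ℂ → ℂ be analytic on the strip D and satisfy |Im S(w)| ≤ (1/2)·Im w for every w ∈ D with Im w ≥ 0. Define f(z) = √z · exp(S(Log z)) for z ∈ ℂ ∖ (−∞,0]. Then f belongs to OM₊, f is not identically zero on the slit plane, and S(w) = Log f(e^w) − w/2 for every w ∈ D. -/
open Complex MeasureTheory Filter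

noncomputable section

lemma strip_open : IsOpen strip := by
  have : strip = Complex.im ⁻¹' Set.Ioo (-Real.pi) Real.pi := rfl
  rw [this]; exact isOpen_Ioo.preimage Complex.continuous_im

lemma log_mem_strip {z : ℂ} (hz : z ∈ Complex.slitPlane) : Complex.log z ∈ strip := by
  refine ⟨by simpa [Complex.log_im] using Complex.neg_pi_lt_arg z, ?_⟩
  rw [Complex.log_im]
  exact lt_of_le_of_ne (Complex.arg_le_pi z) (Complex.slitPlane_arg_ne_pi hz)

lemma conj_mem_strip {w : ℂ} (hw : w ∈ strip) : (starRingEnd ℂ) w ∈ strip := by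
  obtain ⟨h1, h2⟩ := hw
  exact ⟨by simpa using neg_lt_neg h2, by simpa using neg_lt_neg h1⟩

lemma hasDerivAt_conj_conj {S : ℂ → ℂ} {c w : ℂ}
    (h : HasDerivAt S c ((starRingEnd ℂ) w)) :
    HasDerivAt (fun z => (starRingEnd ℂ) (S ((starRingEnd ℂ) z))) ((starRingEnd ℂ) c) w := by
  have h1 : HasFDerivAt S
      ((ContinuousLinearMap.smulRight (1 : ℂ →L[ℂ] ℂ) c).restrictScalars ℝ)
      ((starRingEnd ℂ) w) := h.hasFDerivAt.restrictScalars ℝ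
  have hc : HasFDerivAt (fun z : ℂ => (starRingEnd ℂ) z)
      (Complex.conjCLE : ℂ ≃L[ℝ] ℂ).toContinuousLinearMap w :=
    Complex.conjCLE.hasFDerivAt
  have hc2 : HasFDerivAt (fun z : ℂ => (starRingEnd ℂ) z)
      (Complex.conjCLE : ℂ ≃L[ℝ] ℂ).toContinuousLinearMap (S ((starRingEnd ℂ) w)) :=
    Complex.conjCLE.hasFDerivAt
  have h2 := hc2.comp w (h1.comp w hc)
  have heq : ((Complex.conjCLE : ℂ ≃L[ℝ] ℂ).toContinuousLinearMap.comp
      (((ContinuousLinearMap.smulRight (1 : ℂ →L[ℂ] ℂ) c).restrictScalars ℝ).comp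
        (Complex.conjCLE : ℂ ≃L[ℝ] ℂ).toContinuousLinearMap)) =
      ((ContinuousLinearMap.smulRight (1 : ℂ →L[ℂ] ℂ) ((starRingEnd ℂ) c)).restrictScalars ℝ) := by
    ext z
    simp [Complex.conjCLE_apply, mul_comm]
  have h3 := (hasFDerivAt_of_restrictScalars ℝ h2 heq.symm).hasDerivAt
  simpa only [Function.comp_def, ContinuousLinearMap.smulRight_apply, ContinuousLinearMap.one_apply, one_smul] using h3

lemma strip_preconnected : IsPreconnected strip := by
  have hc : Convex ℝ strip := by
    have : strip = Complex.imLm ⁻¹' Set.Ioo (-Real.pi) Real.pi := rfl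
    rw [this]
    exact (convex_Ioo _ _).linear_preimage Complex.imLm
  exact hc.isPreconnected

lemma real_mem_strip (x : ℝ) : (x : ℂ) ∈ strip := by
  constructor <;> simp [Real.pi_pos, neg_lt_zero]

lemma refl_bound (S : ℂ → ℂ) (hSan : DifferentiableOn ℂ S strip)
    (hSim : ∀ w ∈ strip, 0 ≤ w.im → |(S w).im| ≤ w.im / 2) :
    ∀ w ∈ strip, |(S w).im| ≤ |w.im| / 2 := by
  set T : ℂ → ℂ := fun z => (starRingEnd ℂ) (S ((starRingEnd ℂ) z)) with hT
  have hTd : DifferentiableOn ℂ T strip := by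
    intro w hw
    have hw' : (starRingEnd ℂ) w ∈ strip := conj_mem_strip hw
    have hD : DifferentiableAt ℂ S ((starRingEnd ℂ) w) :=
      (hSan _ hw').differentiableAt (strip_open.mem_nhds hw')
    exact (hasDerivAt_conj_conj hD.hasDerivAt).differentiableAt.differentiableWithinAt
  have h0 : (0 : ℂ) ∈ strip := real_mem_strip 0
  have hreal : ∀ x : ℝ, S (x : ℂ) = T (x : ℂ) := by
    intro x
    have h1 := hSim _ (real_mem_strip x) (by simp)
    have him : (S (x : ℂ)).im = 0 := abs_nonpos_iff.mp (by simpa using h1)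
    have : (starRingEnd ℂ) (S (x : ℂ)) = S (x : ℂ) := Complex.conj_eq_iff_im.mpr him
    simp [hT, Complex.conj_ofReal, this]
  have hfreq : ∃ᶠ z in nhdsWithin (0 : ℂ) {(0 : ℂ)}ᶜ, S z = T z := by
    have htend : Tendsto (fun n : ℕ => ((((n : ℝ) + 1)⁻¹ : ℝ) : ℂ)) atTop
        (nhdsWithin (0 : ℂ) {(0 : ℂ)}ᶜ) := by
      apply tendsto_nhdsWithin_of_tendsto_nhds_of_eventually_within
      · have h1 : Tendsto (fun n : ℕ => ((n : ℝ) + 1)⁻¹) atTop (nhds 0) :=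
          tendsto_one_div_add_atTop_nhds_zero_nat.congr (by intro n; rw [one_div])
        have := (Complex.continuous_ofReal.tendsto 0).comp h1
        exact this
      · filter_upwards with n
        simp only [Set.mem_compl_iff, Set.mem_singleton_iff]
        intro h
        have : (((n : ℝ) + 1)⁻¹ : ℝ) = 0 := by exact_mod_cast h
        have hpos : (0 : ℝ) < ((n : ℝ) + 1)⁻¹ := by positivity
        linarith
    exact htend.frequently (Eventually.frequently (Eventually.of_forall fun n => hreal _))
  have hSa : AnalyticOnNhd ℂ S strip := hSan.analyticOnNhd strip_open
  have hTa : AnalyticOnNhd ℂ T strip := hTd.analyticOnNhd strip_open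
  have heq : Set.EqOn S T strip :=
    hSa.eqOn_of_preconnected_of_frequently_eq hTa strip_preconnected h0 hfreq
  intro w hw
  rcases le_or_gt 0 w.im with h | h
  · calc |(S w).im| ≤ w.im / 2 := hSim w hw h
      _ = |w.im| / 2 := by rw [_root_.abs_of_nonneg h]
  · have hw' := conj_mem_strip hw
    have hb := hSim _ hw' (by simpa using h.le)
    have hSw : S w = (starRingEnd ℂ) (S ((starRingEnd ℂ) w)) := heq hw
    rw [hSw, Complex.conj_im, abs_neg]
    calc |(S ((starRingEnd ℂ) w)).im| ≤ ((starRingEnd ℂ) w).im / 2 := hb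
      _ = |w.im| / 2 := by rw [Complex.conj_im, _root_.abs_of_neg h]

lemma exp_mem_slitPlane {w : ℂ} (hw : w ∈ strip) : Complex.exp w ∈ Complex.slitPlane := by
  rw [Complex.mem_slitPlane_iff]
  by_cases hs : Real.sin w.im = 0
  · left
    have him0 : w.im = 0 := (Real.sin_eq_zero_iff_of_lt_of_lt hw.1 hw.2).mp hs
    rw [Complex.exp_re, him0]
    simpa using Real.exp_pos w.re
  · right
    rw [Complex.exp_im]
    exact mul_ne_zero (Real.exp_ne_zero _) hs

lemma div_two_im (w : ℂ) : (w / 2).im = w.im / 2 := by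
  rw [Complex.div_im]
  simp [Complex.normSq]
  ring

/-- Converse direction: if `S` is analytic on the strip `D` and
`|Im S(w)| ≤ Im w / 2` on the upper half of the strip, then
`f(z) = √z · exp (S (Log z))` belongs to `OM₊`, is not identically zero
on the slit plane, and `S(w) = Log f(e^w) - w/2` on `D`. -/
theorem stmt_3 (S : ℂ → ℂ) (hSan : DifferentiableOn ℂ S strip)
    (hSim : ∀ w ∈ strip, 0 ≤ w.im → |(S w).im| ≤ w.im / 2)
    (f : ℂ → ℂ)
    (hfdef : ∀ z ∈ Complex.slitPlane,
      f z = z ^ (1 / 2 : ℂ) * Complex.exp (S (Complex.log z))) :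
    OMplus f ∧ (∃ z ∈ Complex.slitPlane, f z ≠ 0) ∧
    (∀ w ∈ strip, S w = Complex.log (f (Complex.exp w)) - w / 2) := by
  have hbound := refl_bound S hSan hSim
  have hfexp : ∀ w ∈ strip, f (Complex.exp w) = Complex.exp (w / 2 + S w) := by
    intro w hw
    have h1 : Complex.exp w ∈ Complex.slitPlane := exp_mem_slitPlane hw
    have hlog : Complex.log (Complex.exp w) = w := Complex.log_exp hw.1 hw.2.le
    rw [hfdef _ h1, hlog, Complex.cpow_def_of_ne_zero (Complex.exp_ne_zero w), hlog,
      ← Complex.exp_add]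
    congr 1
    ring
  refine ⟨⟨?_, ?_, ?_⟩, ?_, ?_⟩
  · intro z hz
    have hLs := log_mem_strip hz
    have hd : DifferentiableAt ℂ
        (fun z => z ^ (1 / 2 : ℂ) * Complex.exp (S (Complex.log z))) z := by
      apply DifferentiableAt.mul
      · exact differentiableAt_id.cpow (differentiableAt_const _) hz
      · exact (DifferentiableAt.comp z
          ((hSan _ hLs).differentiableAt (strip_open.mem_nhds hLs))
          (Complex.differentiableAt_log hz)).cexp
    exact hd.differentiableWithinAt.congr (fun y hy => hfdef y hy) (hfdef z hz)
  · intro x hx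
    have hz : (x : ℂ) ∈ Complex.slitPlane :=
      Complex.mem_slitPlane_iff.mpr (Or.inl (by simpa using hx))
    set w := Complex.log (x : ℂ) with hwdef
    have him : w.im = 0 := by
      rw [hwdef, Complex.log_im, Complex.arg_ofReal_of_nonneg hx.le]
    have hws : w ∈ strip := log_mem_strip hz
    have hS0 : (S w).im = 0 :=
      abs_nonpos_iff.mp (by simpa [him] using hSim w hws (le_of_eq him.symm))
    refine ⟨x ^ (1 / 2 : ℝ) * Real.exp ((S w).re), by positivity, ?_⟩
    have h1 : ((x : ℂ)) ^ (1 / 2 : ℂ) = ((x ^ (1 / 2 : ℝ) : ℝ) : ℂ) := by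
      rw [Complex.ofReal_cpow hx.le]
      norm_num
    have h2 : S w = (((S w).re : ℝ) : ℂ) := by
      apply Complex.ext <;> simp [hS0]
    rw [hfdef _ hz, ← hwdef, h1, h2, ← Complex.ofReal_exp, ← Complex.ofReal_mul]
    simp
  · intro z hz
    have hzs : z ∈ Complex.slitPlane :=
      Complex.mem_slitPlane_iff.mpr (Or.inr (ne_of_gt hz))
    set w := Complex.log z with hwdef
    have hws : w ∈ strip := log_mem_strip hzs
    have hwim : 0 ≤ w.im := by
      rw [hwdef, Complex.log_im]
      exact Complex.arg_nonneg_iff.mpr hz.le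
    have hz' : z = Complex.exp w := (Complex.exp_log (Complex.slitPlane_ne_zero hzs)).symm
    rw [hz', hfexp w hws, Complex.exp_im]
    have habs := abs_le.mp (hSim w hws hwim)
    have himu : (w / 2 + S w).im = w.im / 2 + (S w).im := by
      rw [Complex.add_im, div_two_im]
    apply mul_nonneg (Real.exp_pos _).le
    apply Real.sin_nonneg_of_nonneg_of_le_pi
    · rw [himu]; linarith [habs.1]
    · rw [himu]; linarith [habs.2, hws.2]
  · refine ⟨1, Complex.mem_slitPlane_iff.mpr (Or.inl (by norm_num)), ?_⟩
    rw [hfdef 1 (Complex.mem_slitPlane_iff.mpr (Or.inl (by norm_num)))]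
    simp [Complex.one_cpow, Complex.exp_ne_zero]
  · intro w hw
    have hb := hbound w hw
    have hwa : |w.im| < Real.pi := abs_lt.mpr ⟨hw.1, hw.2⟩
    have himu : (w / 2 + S w).im = w.im / 2 + (S w).im := by
      rw [Complex.add_im, div_two_im]
    have habs : |(w / 2 + S w).im| < Real.pi := by
      rw [himu]
      calc |w.im / 2 + (S w).im| ≤ |w.im / 2| + |(S w).im| := abs_add_le _ _
        _ ≤ |w.im| / 2 + |w.im| / 2 := by
            rw [abs_div, _root_.abs_two]
            linarith [hb]
        _ = |w.im| := by ring
        _ < Real.pi := hwa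
    have hlt := abs_lt.mp habs
    rw [hfexp w hw, Complex.log_exp hlt.1 hlt.2.le]
    ring
end
end
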